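/- For every μ ∈ R and every G ∈ R[[q]]: 𝒟'(Ψ_μ(G)) − Ψ_μ(𝒟(G)) = μ·E₄·((X+1)·G − (1/12)·ℱ(G)). (This is the paper's identity ψ²𝒟ψ⁻²·Ψ(μ) − Ψ(μ)·𝒟 = μ·E₄·((k+1) − ℱ/12), conjugated by q^{k/2}.) -/

import Mathlib

open PowerSeries

noncomputable section

/-- `sigma' j n = ∑_{d ∣ n} d^j`. -/
def sigma' (j n : ℕ) : ℕ := ∑ d ∈ n.divisors, d ^ j

/-- The Eisenstein series `E₂ = 1 − 24∑σ₁(n)qⁿ`. -/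
def E2 : PowerSeries ℚ :=
  PowerSeries.mk fun n => if n = 0 then 1 else -24 * (sigma' 1 n : ℚ)

/-- The Eisenstein series `E₄ = 1 + 240∑σ₃(n)qⁿ`. -/
def E4 : PowerSeries ℚ :=
  PowerSeries.mk fun n => if n = 0 then 1 else 240 * (sigma' 3 n : ℚ)

/-- The Eisenstein series `E₆ = 1 − 504∑σ₅(n)qⁿ`. -/
def E6 : PowerSeries ℚ :=
  PowerSeries.mk fun n => if n = 0 then 1 else -504 * (sigma' 5 n : ℚ)

/-- The discriminant `Δ = (E₄³ − E₆²)/1728`. -/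
def Δ' : PowerSeries ℚ := PowerSeries.C (R := ℚ) (1/1728) * (E4 ^ 3 - E6 ^ 2)

/-- The derivation `D(f) = q·df/dq`. -/
def Dq {R : Type*} [Semiring R] (f : PowerSeries R) : PowerSeries R :=
  PowerSeries.mk fun n => (n : R) * PowerSeries.coeff (R := R) n f

/-- `μ_0 = −1` and `μ_k = 12(6k+1)(6k+5)/(k(k+1))` for `k ≥ 1`. -/
def μ (k : ℕ) : ℚ :=
  if k = 0 then -1 else 12 * (6*(k:ℚ)+1) * (6*(k:ℚ)+5) / ((k:ℚ)*((k:ℚ)+1))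

/-- `μ*_0 = −1` and `μ*_k = 12(6k−1)(6k+7)/(k(k+1))` for `k ≥ 1`. -/
def μs (k : ℕ) : ℚ :=
  if k = 0 then -1 else 12 * (6*(k:ℚ)-1) * (6*(k:ℚ)+7) / ((k:ℚ)*((k:ℚ)+1))

/-- `g k` is the q-expansion of the Kaneko–Koike extremal quasimodular form `f_{1,6k}`:
`g 0 = 1`, `g 1 = D(E₄)/240`, `g (k+2) = E₆·g(k+1) + μ_k·Δ·g(k)`. -/
def g : ℕ → PowerSeries ℚ
  | 0 => 1
  | 1 => PowerSeries.C (R := ℚ) (1/240) * Dq E4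
  | (k+2) => E6 * g (k+1) + PowerSeries.C (R := ℚ) (μ k) * (Δ' * g k)

/-- `h k` is the q-expansion of the extremal quasimodular form `f_{1,6k+2}`:
`h 0 = E₂`, `h 1 = −D(E₆)/504`, `h (k+2) = E₆·h(k+1) + μ*_k·Δ·h(k)`. -/
def h : ℕ → PowerSeries ℚ
  | 0 => E2
  | 1 => PowerSeries.C (R := ℚ) (-(1/504)) * Dq E6
  | (k+2) => E6 * h (k+1) + PowerSeries.C (R := ℚ) (μs k) * (Δ' * h k)

end

noncomputable section

/-- The inclusion `ℚ[[q]] ⊆ R[[q]]` where `R = RatFunc ℚ`. -/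
def ι : PowerSeries ℚ →+* PowerSeries (RatFunc ℚ) :=
  PowerSeries.map (algebraMap ℚ (RatFunc ℚ))

/-- Multiplication by the constant power series `X ∈ R`. -/
def Xc : PowerSeries (RatFunc ℚ) := PowerSeries.C (R := RatFunc ℚ) RatFunc.X

/-- The operator `𝒟(G) = D²(G) + X·D(G) + ((X²/4)·(1−E₄) + 144·Δ·E₄⁻²)·G`. -/
def Dcal (G : PowerSeries (RatFunc ℚ)) : PowerSeries (RatFunc ℚ) :=
  Dq (Dq G) + Xc * Dq G +
    (PowerSeries.C (R := RatFunc ℚ) (RatFunc.X^2/4) * (1 - ι E4)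
      + ι (PowerSeries.C (R := ℚ) 144 * Δ' * (E4⁻¹)^2)) * G

/-- The operator `𝒟'(G) = D²(G) + X·D(G) + (X²/4 − ((X+2)²/4)·E₄ + 144·Δ·E₄⁻²)·G`. -/
def Dcal' (G : PowerSeries (RatFunc ℚ)) : PowerSeries (RatFunc ℚ) :=
  Dq (Dq G) + Xc * Dq G +
    (PowerSeries.C (R := RatFunc ℚ) (RatFunc.X^2/4)
      - PowerSeries.C (R := RatFunc ℚ) ((RatFunc.X+2)^2/4) * ι E4
      + ι (PowerSeries.C (R := ℚ) 144 * Δ' * (E4⁻¹)^2)) * G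

/-- The coefficientwise ring endomorphism `Ψ` of `R[[q]]` induced by `σ : R → R`. -/
def Ψop (σ : RatFunc ℚ →ₐ[ℚ] RatFunc ℚ) :
    PowerSeries (RatFunc ℚ) →+* PowerSeries (RatFunc ℚ) :=
  PowerSeries.map σ.toRingHom

/-- The operator `ℱ(G) = S⁻¹·(12·E₄·D(Ψ(G)) + (6(X+1)·E₄ + E₂·E₄ + (6X+5)·E₆)·Ψ(G))`. -/
def Fcal (σ : RatFunc ℚ →ₐ[ℚ] RatFunc ℚ) (S : PowerSeries ℚ)
    (G : PowerSeries (RatFunc ℚ)) : PowerSeries (RatFunc ℚ) :=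
  ι S⁻¹ * (PowerSeries.C (R := RatFunc ℚ) 12 * ι E4 * Dq (Ψop σ G)
    + (PowerSeries.C (R := RatFunc ℚ) (6*(RatFunc.X+1)) * ι E4 + ι (E2*E4)
      + PowerSeries.C (R := RatFunc ℚ) (6*RatFunc.X+5) * ι E6) * Ψop σ G)

/-- The operator `Ψ_μ(G) = q·Ψ(Ψ(G)) + μ·(E₆·S⁻¹·Ψ(G) − G)`. -/
def Psimu (σ : RatFunc ℚ →ₐ[ℚ] RatFunc ℚ) (S : PowerSeries ℚ) (m : RatFunc ℚ)
    (G : PowerSeries (RatFunc ℚ)) : PowerSeries (RatFunc ℚ) :=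
  PowerSeries.X * Ψop σ (Ψop σ G)
    + PowerSeries.C (R := RatFunc ℚ) m * (ι E6 * ι S⁻¹ * Ψop σ G - G)


/-!
Write `𝒟ₖ` for `𝒟` with the weight `X` replaced by `k`, so that `𝒟 = 𝒟_X` and `Ψ ∘ 𝒟ₖ = 𝒟ₖ₊₁ ∘ Ψ`.
Since `𝒟'(q·H) = q·𝒟_{X+2}(H)`, the term `q·Ψ²` of `Ψ_μ` commutes past the operators; `𝒟' − 𝒟` is
multiplication by `−(X+1)·E₄`, which produces the term `μ·(X+1)·E₄·G`; and for the term
`μ·E₆S⁻¹·Ψ` everything reduces to the first two derivatives of `E₆S⁻¹`. These are fixed by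
Ramanujan's identities `3·DE₄ = E₂E₄ − E₆`, `2·DE₆ = E₂E₆ − E₄²` and their consequence `DΔ = E₂Δ`,
i.e. `2·DS = (E₂ − 1)·S`.

Coefficientwise, Ramanujan's identities are the convolution identities for `σ₁ ∗ σ₃`, `σ₁ ∗ σ₅`
and `σ₃ ∗ σ₃`, which we prove by Skoruppa's elementary count of the solutions of `ax + by = n`.
-/
open Finset

variable {M : Type*} [AddCommMonoid M]

theorem sum_eq_sum_filter_lt_add_sum_filter_gt_add_sum_filter_eq {α β : Type*} [LinearOrder β]
    (s : Finset α) (u v : α → β) (f : α → M) :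
    ∑ q ∈ s, f q = ∑ q ∈ s.filter (fun q => v q < u q), f q
      + ∑ q ∈ s.filter (fun q => u q < v q), f q + ∑ q ∈ s.filter (fun q => u q = v q), f q := by
  simp only [sum_filter, ← sum_add_distrib]
  refine sum_congr rfl fun q _ => ?_
  rcases lt_trichotomy (u q) (v q) with h | h | h
  · simp [h, h.not_gt, h.ne]
  · simp [h]
  · simp [h, h.not_gt, h.ne']

theorem sum_Ico_one_eq_sum_range {f : ℕ → M} (hf : f 0 = 0) (m : ℕ) :
    ∑ t ∈ Ico 1 m, f t = ∑ t ∈ range m, f t := by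
  rcases m with _ | m
  · simp
  · rw [range_eq_Ico, sum_eq_sum_Ico_succ_bot m.succ_pos, hf, zero_add]

theorem sum_divisorsAntidiagonal_eq_of_eq_add_sub {G : Type*} [AddCommGroup G] {n : ℕ}
    (F F' : ℕ × ℕ → G) (φ : ℕ → G)
    (h : ∀ p, F p = F' p + (φ p.1 - φ p.2)) :
    ∑ p ∈ n.divisorsAntidiagonal, F p = ∑ p ∈ n.divisorsAntidiagonal, F' p := by
  have hswap : ∑ p ∈ n.divisorsAntidiagonal, φ p.1 = ∑ p ∈ n.divisorsAntidiagonal, φ p.2 := by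
    rw [Nat.sum_divisorsAntidiagonal (fun a _ => φ a),
      Nat.sum_divisorsAntidiagonal' (fun _ b => φ b)]
  simp only [h, sum_add_distrib, sum_sub_distrib, hswap, sub_self, add_zero]

section PowerSums

variable (m : ℕ)

theorem sum_range_pow_one : ∑ t ∈ range m, (t : ℚ) = m ^ 2 / 2 - m / 2 := by
  induction m with
  | zero => simp
  | succ m ih => rw [sum_range_succ, ih]; push_cast; ring

theorem sum_range_pow_two : ∑ t ∈ range m, (t : ℚ) ^ 2 = m ^ 3 / 3 - m ^ 2 / 2 + m / 6 := by
  induction m with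
  | zero => simp
  | succ m ih => rw [sum_range_succ, ih]; push_cast; ring

theorem sum_range_pow_three :
    ∑ t ∈ range m, (t : ℚ) ^ 3 = m ^ 4 / 4 - m ^ 3 / 2 + m ^ 2 / 4 := by
  induction m with
  | zero => simp
  | succ m ih => rw [sum_range_succ, ih]; push_cast; ring

theorem sum_range_pow_four :
    ∑ t ∈ range m, (t : ℚ) ^ 4 = m ^ 5 / 5 - m ^ 4 / 2 + m ^ 3 / 3 - m / 30 := by
  induction m with
  | zero => simp
  | succ m ih => rw [sum_range_succ, ih]; push_cast; ring

theorem sum_range_pow_five :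
    ∑ t ∈ range m, (t : ℚ) ^ 5 = m ^ 6 / 6 - m ^ 5 / 2 + 5 * m ^ 4 / 12 - m ^ 2 / 12 := by
  induction m with
  | zero => simp
  | succ m ih => rw [sum_range_succ, ih]; push_cast; ring

theorem sum_range_pow_six : ∑ t ∈ range m, (t : ℚ) ^ 6
    = m ^ 7 / 7 - m ^ 6 / 2 + m ^ 5 / 2 - m ^ 3 / 6 + m / 42 := by
  induction m with
  | zero => simp
  | succ m ih => rw [sum_range_succ, ih]; push_cast; ring

end PowerSums

section Derivation

variable {R : Type*} [CommRing R]

theorem Dq_eq_X_mul_derivative (f : PowerSeries R) : Dq f = X * d⁄dX R f := by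
  ext n
  rcases n with _ | n
  · simp [Dq]
  · simp [Dq, coeff_succ_X_mul, coeff_derivative, mul_comm]

theorem Dq_add (f g : PowerSeries R) : Dq (f + g) = Dq f + Dq g := by
  simp only [Dq_eq_X_mul_derivative, map_add, mul_add]

theorem Dq_sub (f g : PowerSeries R) : Dq (f - g) = Dq f - Dq g := by
  simp only [Dq_eq_X_mul_derivative, map_sub, mul_sub]

theorem Dq_mul (f g : PowerSeries R) : Dq (f * g) = Dq f * g + f * Dq g := by
  simp only [Dq_eq_X_mul_derivative, Derivation.leibniz, smul_eq_mul]
  ring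

theorem Dq_pow (f : PowerSeries R) (k : ℕ) : Dq (f ^ k) = k * f ^ (k - 1) * Dq f := by
  simp only [Dq_eq_X_mul_derivative, Derivation.leibniz_pow, smul_eq_mul, nsmul_eq_mul]
  ring

@[simp] theorem Dq_C (r : R) : Dq (C r) = 0 := by
  simp [Dq_eq_X_mul_derivative]

@[simp] theorem Dq_one : Dq (1 : PowerSeries R) = 0 := by
  rw [← map_one C, Dq_C]

@[simp] theorem Dq_ofNat (k : ℕ) [k.AtLeastTwo] : Dq (OfNat.ofNat k : PowerSeries R) = 0 := by
  rw [← map_ofNat C, Dq_C]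

@[simp] theorem Dq_X : Dq (X : PowerSeries R) = X := by
  simp [Dq_eq_X_mul_derivative]

theorem Dq_C_mul (r : R) (f : PowerSeries R) : Dq (C r * f) = C r * Dq f := by
  simp [Dq_mul]

theorem Dq_map {S : Type*} [CommRing S] (φ : R →+* S) (f : PowerSeries R) :
    Dq (map φ f) = map φ (Dq f) := by
  ext n; simp [Dq]

end Derivation

section Quadruples

variable {n : ℕ} {K : Type*} [CommRing K]

def quadruples (n : ℕ) : Finset ((ℕ × ℕ) × (ℕ × ℕ)) :=
  (antidiagonal n).biUnion fun kl => kl.1.divisorsAntidiagonal ×ˢ kl.2.divisorsAntidiagonal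

theorem mem_quadruples {a x b y : ℕ} :
    ((a, x), (b, y)) ∈ quadruples n ↔ a * x + b * y = n ∧ 0 < a ∧ 0 < x ∧ 0 < b ∧ 0 < y := by
  simp only [quadruples, mem_biUnion, HasAntidiagonal.mem_antidiagonal, mem_product,
    Nat.mem_divisorsAntidiagonal, Prod.exists, Nat.pos_iff_ne_zero]
  constructor
  · rintro ⟨k, l, rfl, ⟨rfl, hax⟩, rfl, hby⟩
    simp_all
  · rintro ⟨rfl, ha, hx, hb, hy⟩
    exact ⟨_, _, rfl, ⟨rfl, mul_ne_zero ha hx⟩, rfl, mul_ne_zero hb hy⟩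

theorem sum_filter_quadruples_perm (e : Equiv.Perm ((ℕ × ℕ) × (ℕ × ℕ)))
    (he : ∀ q, e q ∈ quadruples n ↔ q ∈ quadruples n) (p : (ℕ × ℕ) × (ℕ × ℕ) → Prop)
    [DecidablePred p] (f : (ℕ × ℕ) × (ℕ × ℕ) → M) :
    ∑ q ∈ (quadruples n).filter p, f q = ∑ q ∈ (quadruples n).filter (p ∘ e), f (e q) :=
  (sum_equiv e (by simp [he]) (fun _ _ => rfl)).symm

theorem prodComm_mem_quadruples (q : (ℕ × ℕ) × (ℕ × ℕ)) :
    Equiv.prodComm _ _ q ∈ quadruples n ↔ q ∈ quadruples n := by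
  obtain ⟨⟨a, x⟩, b, y⟩ := q
  simp only [Equiv.prodComm_apply, Prod.swap_prod_mk, mem_quadruples]
  constructor <;> rintro ⟨h, h1, h2, h3, h4⟩ <;> exact ⟨by omega, h3, h4, h1, h2⟩

theorem prodCongr_prodComm_mem_quadruples (q : (ℕ × ℕ) × (ℕ × ℕ)) :
    (Equiv.prodComm ℕ ℕ).prodCongr (Equiv.prodComm ℕ ℕ) q ∈ quadruples n ↔ q ∈ quadruples n := by
  obtain ⟨⟨a, x⟩, b, y⟩ := q
  simp only [Equiv.prodCongr_apply, Equiv.coe_prodComm, Prod.map_apply, Prod.swap_prod_mk,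
    mem_quadruples, mul_comm x a, mul_comm y b]
  tauto

theorem sum_filter_quadruples_shear (f : (ℕ × ℕ) × (ℕ × ℕ) → M) :
    ∑ q ∈ (quadruples n).filter (fun q => q.2.1 < q.1.1), f q
      = ∑ q ∈ (quadruples n).filter (fun q => q.1.2 < q.2.2),
          f ((q.1.1 + q.2.1, q.1.2), (q.2.1, q.2.2 - q.1.2)) := by
  refine sum_nbij' (fun q => ((q.1.1 - q.2.1, q.1.2), (q.2.1, q.1.2 + q.2.2)))
    (fun q => ((q.1.1 + q.2.1, q.1.2), (q.2.1, q.2.2 - q.1.2))) ?_ ?_ ?_ ?_ ?_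
  all_goals rintro ⟨⟨a, x⟩, b, y⟩ hq
  all_goals simp only [mem_filter, mem_quadruples] at hq ⊢
  · obtain ⟨⟨rfl, ha, hx, hb, hy⟩, hba⟩ := hq
    refine ⟨⟨?_, by omega, hx, hb, by omega⟩, by omega⟩
    zify [hba.le]; ring
  · obtain ⟨⟨rfl, ha, hx, hb, hy⟩, hxy⟩ := hq
    refine ⟨⟨?_, by omega, hx, hb, by omega⟩, by omega⟩
    zify [hxy.le]; ring
  · rw [Nat.sub_add_cancel hq.2.le, Nat.add_sub_cancel_left]
  · rw [Nat.add_sub_cancel, Nat.add_sub_cancel' hq.2.le]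
  · rw [Nat.sub_add_cancel hq.2.le, Nat.add_sub_cancel_left]

theorem sum_filter_quadruples_fst_eq (f : (ℕ × ℕ) × (ℕ × ℕ) → M) :
    ∑ q ∈ (quadruples n).filter (fun q => q.1.1 = q.2.1), f q
      = ∑ p ∈ n.divisorsAntidiagonal, ∑ t ∈ Ico 1 p.2, f ((p.1, t), (p.1, p.2 - t)) := by
  rw [sum_sigma']
  refine (sum_nbij' (fun s => ((s.1.1, s.2), (s.1.1, s.1.2 - s.2)))
    (fun q => ⟨(q.1.1, q.1.2 + q.2.2), q.1.2⟩) ?_ ?_ ?_ ?_ ?_).symm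
  · rintro ⟨⟨d, m⟩, t⟩ hs
    simp only [mem_sigma, Nat.mem_divisorsAntidiagonal, mem_Ico] at hs
    simp only [mem_filter, mem_quadruples, and_true]
    obtain ⟨⟨rfl, hdm⟩, ht, htm⟩ := hs
    refine ⟨?_, Nat.pos_of_ne_zero (left_ne_zero_of_mul hdm), ht, ?_, by omega⟩
    · rw [← mul_add, Nat.add_sub_cancel' htm.le]
    · exact Nat.pos_of_ne_zero (left_ne_zero_of_mul hdm)
  · rintro ⟨⟨a, x⟩, b, y⟩ hq
    simp only [mem_filter, mem_quadruples] at hq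
    obtain ⟨⟨rfl, ha, hx, hb, hy⟩, rfl⟩ := hq
    simp only [mem_sigma, Nat.mem_divisorsAntidiagonal, mem_Ico]
    exact ⟨⟨by ring, by positivity⟩, hx, by omega⟩
  · rintro ⟨⟨d, m⟩, t⟩ hs
    simp only [mem_sigma, mem_Ico] at hs
    simp [Nat.add_sub_cancel' hs.2.2.le]
  · rintro ⟨⟨a, x⟩, b, y⟩ hq
    simp only [mem_filter] at hq
    simp [hq.2]
  · intro _ _; rfl

theorem sum_quadruples_eq_sum_shear (g : K → K → K) :
    ∑ q ∈ quadruples n, g q.1.2 q.2.2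
      = ∑ q ∈ (quadruples n).filter (fun q => q.1.2 < q.2.2),
          (g q.1.2 (q.2.2 - q.1.2) + g (q.2.2 - q.1.2) q.1.2)
        + ∑ p ∈ n.divisorsAntidiagonal, ∑ t ∈ Ico 1 p.2, g t (p.2 - t) := by
  have hcast : ∀ q ∈ (quadruples n).filter (fun q => q.1.2 < q.2.2),
      ((q.2.2 - q.1.2 : ℕ) : K) = q.2.2 - q.1.2 := fun q hq => Nat.cast_sub (mem_filter.1 hq).2.le
  have hgt : ∑ q ∈ (quadruples n).filter (fun q => q.2.1 < q.1.1), g q.1.2 q.2.2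
      = ∑ q ∈ (quadruples n).filter (fun q => q.1.2 < q.2.2), g q.1.2 (q.2.2 - q.1.2) := by
    rw [sum_filter_quadruples_shear]
    exact sum_congr rfl fun q hq => by rw [hcast q hq]
  have hlt : ∑ q ∈ (quadruples n).filter (fun q => q.1.1 < q.2.1), g q.1.2 q.2.2
      = ∑ q ∈ (quadruples n).filter (fun q => q.1.2 < q.2.2), g (q.2.2 - q.1.2) q.1.2 := by
    rw [sum_filter_quadruples_perm _ prodComm_mem_quadruples]
    refine (sum_filter_quadruples_shear (fun q => g q.2.2 q.1.2)).trans ?_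
    exact sum_congr rfl fun q hq => by rw [hcast q hq]
  rw [sum_eq_sum_filter_lt_add_sum_filter_gt_add_sum_filter_eq _ (fun q => q.1.1) (fun q => q.2.1),
    hgt, hlt, sum_filter_quadruples_fst_eq, sum_add_distrib]
  congr 1
  refine sum_congr rfl fun p _ => sum_congr rfl fun t ht => ?_
  simp [Nat.cast_sub (mem_Ico.1 ht).2.le]

theorem sum_quadruples_eq_sum_symm (g : K → K → K) :
    ∑ q ∈ quadruples n, g q.1.2 q.2.2
      = ∑ q ∈ (quadruples n).filter (fun q => q.1.2 < q.2.2), (g q.1.2 q.2.2 + g q.2.2 q.1.2)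
        + ∑ p ∈ n.divisorsAntidiagonal, (p.2 - 1) * g p.1 p.1 := by
  have hgt : ∑ q ∈ (quadruples n).filter (fun q => q.2.2 < q.1.2), g q.1.2 q.2.2
      = ∑ q ∈ (quadruples n).filter (fun q => q.1.2 < q.2.2), g q.2.2 q.1.2 :=
    sum_filter_quadruples_perm _ prodComm_mem_quadruples _ _
  have heq : ∑ q ∈ (quadruples n).filter (fun q => q.1.2 = q.2.2), g q.1.2 q.2.2
      = ∑ p ∈ n.divisorsAntidiagonal, (p.2 - 1) * g p.1 p.1 := by
    rw [sum_filter_quadruples_perm _ prodCongr_prodComm_mem_quadruples]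
    refine (sum_filter_quadruples_fst_eq (fun q => g q.1.1 q.2.1)).trans
      (sum_congr rfl fun p hp => ?_)
    have hm : 1 ≤ p.2 := Nat.pos_of_ne_zero (Nat.right_ne_zero_of_mem_divisorsAntidiagonal hp)
    simp [Nat.cast_sub hm]
  rw [sum_eq_sum_filter_lt_add_sum_filter_gt_add_sum_filter_eq _ (fun q => q.1.2) (fun q => q.2.2),
    hgt, heq, ← sum_add_distrib]
  congr 1
  exact sum_congr rfl fun q _ => add_comm _ _

/-- Skoruppa's principle. Sorting the solutions of `ax + by = n` by comparing `a` with `b` and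
shearing the part `a > b` by `(a, x, b, y) ↦ (a - b, x, b, x + y)` (`sum_quadruples_eq_sum_shear`),
or sorting them by comparing `x` with `y` (`sum_quadruples_eq_sum_symm`), gives two decompositions
of `∑ g(x, y)`; under `hg` their difference expresses `∑ g₀(x, y)` by diagonal terms alone. -/
theorem sum_quadruples_eq_of_shear (g g₀ : K → K → K)
    (hg : ∀ x y, g x (y - x) + g (y - x) x - g x y - g y x = g₀ x y + g₀ y x) :
    ∑ q ∈ quadruples n, g₀ q.1.2 q.2.2
      = ∑ p ∈ n.divisorsAntidiagonal,
          ((p.2 - 1) * (g₀ p.1 p.1 + g p.1 p.1) - ∑ t ∈ Ico 1 p.2, g t (p.2 - t)) := by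
  have hshear := sum_quadruples_eq_sum_shear (n := n) g
  have hsymm := sum_quadruples_eq_sum_symm (n := n) g
  have hsymm₀ := sum_quadruples_eq_sum_symm (n := n) g₀
  set L := (quadruples n).filter (fun q => q.1.2 < q.2.2)
  have hbracket : ∑ q ∈ L, (g₀ q.1.2 q.2.2 + g₀ q.2.2 q.1.2)
      = ∑ q ∈ L, (g q.1.2 (q.2.2 - q.1.2) + g (q.2.2 - q.1.2) q.1.2)
        - ∑ q ∈ L, (g q.1.2 q.2.2 + g q.2.2 q.1.2) := by
    rw [← sum_sub_distrib]
    exact sum_congr rfl fun q _ => by rw [← hg]; ring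
  simp only [mul_add, sum_sub_distrib, sum_add_distrib] at hshear hsymm hsymm₀ hbracket ⊢
  linear_combination hsymm₀ + hbracket + hsymm - hshear

end Quadruples

section SigmaSeries

theorem coeff_ofNat_mul {R : Type*} [Semiring R] (k n : ℕ) [k.AtLeastTwo] (f : PowerSeries R) :
    coeff n ((no_index (OfNat.ofNat k) : PowerSeries R) * f) = OfNat.ofNat k * coeff n f := by
  rw [← map_ofNat C, coeff_C_mul]

def sigmaSeries (j : ℕ) : PowerSeries ℚ := mk fun n => (sigma' j n : ℚ)

theorem sigma'_eq_sum_fst (j n : ℕ) :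
    (sigma' j n : ℚ) = ∑ p ∈ n.divisorsAntidiagonal, (p.1 : ℚ) ^ j := by
  rw [Nat.sum_divisorsAntidiagonal (fun a _ => (a : ℚ) ^ j), sigma']
  push_cast; rfl

theorem sigma'_eq_sum_snd (j n : ℕ) :
    (sigma' j n : ℚ) = ∑ p ∈ n.divisorsAntidiagonal, (p.2 : ℚ) ^ j := by
  rw [Nat.sum_divisorsAntidiagonal' (fun _ b => (b : ℚ) ^ j), sigma']
  push_cast; rfl

theorem coeff_sigmaSeries (j n : ℕ) : coeff n (sigmaSeries j) = sigma' j n := by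
  simp [sigmaSeries]

theorem coeff_Dq_sigmaSeries (j n : ℕ) :
    coeff n (Dq (sigmaSeries j)) = ∑ p ∈ n.divisorsAntidiagonal, (p.1 : ℚ) ^ (j + 1) * p.2 := by
  simp only [Dq, coeff_mk, coeff_sigmaSeries, sigma'_eq_sum_fst, mul_sum]
  refine sum_congr rfl fun p hp => ?_
  rw [← (Nat.mem_divisorsAntidiagonal.1 hp).1]
  push_cast; ring

theorem coeff_sigmaSeries_mul (r s n : ℕ) :
    coeff n (sigmaSeries r * sigmaSeries s)
      = ∑ q ∈ quadruples n, (q.1.2 : ℚ) ^ r * (q.2.2 : ℚ) ^ s := by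
  rw [coeff_mul, quadruples, sum_biUnion]
  · refine sum_congr rfl fun kl _ => ?_
    rw [coeff_sigmaSeries, coeff_sigmaSeries, sigma'_eq_sum_snd, sigma'_eq_sum_snd, sum_mul_sum,
      sum_product]
  · intro kl _ kl' _ hne
    refine disjoint_left.mpr fun q hq hq' => hne ?_
    simp only [mem_product, Nat.mem_divisorsAntidiagonal] at hq hq'
    ext
    · rw [← hq.1.1, ← hq'.1.1]
    · rw [← hq.2.1, ← hq'.2.1]

theorem sigmaSeries_one_mul_sigmaSeries_three :
    240 * (sigmaSeries 1 * sigmaSeries 3)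
      = 21 * sigmaSeries 5 + 10 * sigmaSeries 3 - sigmaSeries 1 - 30 * Dq (sigmaSeries 3) := by
  -- `g` solves the linear system `hg` of `sum_quadruples_eq_of_shear` for `g₀ = x y³`; among its
  -- solutions it is the one without a pure power of `y`, so that `g 0 _ = 0`.
  set g : ℚ → ℚ → ℚ := fun x y => -(2 * x ^ 4 + 4 * x * y ^ 3 + 3 * x ^ 2 * y ^ 2) / 8
  have hdiag (m : ℕ) : ∑ t ∈ Ico 1 m, g t (m - t)
      = m / 240 - m ^ 3 / 24 + m ^ 4 / 8 - 7 * m ^ 5 / 80 := by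
    rw [sum_Ico_one_eq_sum_range (by simp [g])]
    have hexp (t : ℕ) : g t (m - t)
        = -(m ^ 3 / 2) * t + 9 * m ^ 2 / 8 * t ^ 2 - 3 * m / 4 * t ^ 3 - 1 / 8 * t ^ 4 := by
      simp only [g]; ring
    simp only [hexp, sum_add_distrib, sum_sub_distrib, ← mul_sum, sum_range_pow_one,
      sum_range_pow_two, sum_range_pow_three, sum_range_pow_four]
    ring
  ext n
  rw [coeff_ofNat_mul, coeff_sigmaSeries_mul,
    sum_quadruples_eq_of_shear g (fun x y => x ^ 1 * y ^ 3) (fun x y => by simp only [g]; ring)]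
  simp only [map_add, map_sub, coeff_ofNat_mul, coeff_sigmaSeries, coeff_Dq_sigmaSeries, hdiag,
    sigma'_eq_sum_snd, mul_sum, ← sum_add_distrib, ← sum_sub_distrib]
  -- the `d⁴` terms of the two diagonals cancel only after the swap `d ↔ n / d`
  refine sum_divisorsAntidiagonal_eq_of_eq_add_sub _ _ (fun d => 30 * (d : ℚ) ^ 4) fun p => ?_
  simp only [g]; ring

theorem sigmaSeries_one_mul_sigmaSeries_five :
    504 * (sigmaSeries 1 * sigmaSeries 5)
      = 20 * sigmaSeries 7 + 21 * sigmaSeries 5 + sigmaSeries 1 - 42 * Dq (sigmaSeries 5) := by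
  set g : ℚ → ℚ → ℚ := fun x y => -(2 * x ^ 6 + 6 * x * y ^ 5 + 5 * x ^ 2 * y ^ 4) / 12
  have hdiag (m : ℕ) : ∑ t ∈ Ico 1 m, g t (m - t)
      = -(m / 504) - m ^ 5 / 24 + m ^ 6 / 12 - 5 * m ^ 7 / 126 := by
    rw [sum_Ico_one_eq_sum_range (by simp [g])]
    have hexp (t : ℕ) : g t (m - t) = -(m ^ 5 / 2) * t + 25 * m ^ 4 / 12 * t ^ 2
        - 10 * m ^ 3 / 3 * t ^ 3 + 5 * m ^ 2 / 2 * t ^ 4 - 5 * m / 6 * t ^ 5 - 1 / 12 * t ^ 6 := by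
      simp only [g]; ring
    simp only [hexp, sum_add_distrib, sum_sub_distrib, ← mul_sum, sum_range_pow_one,
      sum_range_pow_two, sum_range_pow_three, sum_range_pow_four, sum_range_pow_five,
      sum_range_pow_six]
    ring
  ext n
  rw [coeff_ofNat_mul, coeff_sigmaSeries_mul,
    sum_quadruples_eq_of_shear g (fun x y => x ^ 1 * y ^ 5) (fun x y => by simp only [g]; ring)]
  simp only [map_add, map_sub, coeff_ofNat_mul, coeff_sigmaSeries, coeff_Dq_sigmaSeries, hdiag,
    sigma'_eq_sum_snd, mul_sum, ← sum_add_distrib, ← sum_sub_distrib]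
  refine sum_divisorsAntidiagonal_eq_of_eq_add_sub _ _ (fun d => 42 * (d : ℚ) ^ 6) fun p => ?_
  simp only [g]; ring

theorem sigmaSeries_three_mul_sigmaSeries_three :
    120 * (sigmaSeries 3 * sigmaSeries 3) = sigmaSeries 7 - sigmaSeries 3 := by
  set g : ℚ → ℚ → ℚ := fun x y => -(x ^ 2 * y ^ 4 + x ^ 3 * y ^ 3) / 2
  have hdiag (m : ℕ) : ∑ t ∈ Ico 1 m, g t (m - t) = m ^ 3 / 120 - m ^ 7 / 120 := by
    rw [sum_Ico_one_eq_sum_range (by simp [g])]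
    have hexp (t : ℕ) : g t (m - t) = -(m ^ 4 / 2) * t ^ 2 + 3 * m ^ 3 / 2 * t ^ 3
        - 3 * m ^ 2 / 2 * t ^ 4 + m / 2 * t ^ 5 := by
      simp only [g]; ring
    simp only [hexp, sum_add_distrib, sum_sub_distrib, ← mul_sum, sum_range_pow_two,
      sum_range_pow_three, sum_range_pow_four, sum_range_pow_five]
    ring
  ext n
  rw [coeff_ofNat_mul, coeff_sigmaSeries_mul,
    sum_quadruples_eq_of_shear g (fun x y => x ^ 3 * y ^ 3) (fun x y => by simp only [g]; ring)]
  simp only [map_sub, coeff_sigmaSeries, hdiag, sigma'_eq_sum_snd, mul_sum, ← sum_sub_distrib]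
  exact sum_congr rfl fun p _ => by simp only [g]; ring

end SigmaSeries

section Ramanujan

theorem E2_eq : E2 = 1 - 24 * sigmaSeries 1 := by
  ext n; rcases n with _ | n <;> simp [E2, sigmaSeries, coeff_one, coeff_ofNat_mul, sigma']

theorem E4_eq : E4 = 1 + 240 * sigmaSeries 3 := by
  ext n; rcases n with _ | n <;> simp [E4, sigmaSeries, coeff_one, coeff_ofNat_mul, sigma']

theorem E6_eq : E6 = 1 - 504 * sigmaSeries 5 := by
  ext n; rcases n with _ | n <;> simp [E6, sigmaSeries, coeff_one, coeff_ofNat_mul, sigma']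

theorem three_mul_Dq_E4 : 3 * Dq E4 = E2 * E4 - E6 := by
  rw [E4_eq, Dq_add, Dq_one, Dq_mul, Dq_ofNat, E2_eq, E6_eq]
  linear_combination 24 * sigmaSeries_one_mul_sigmaSeries_three

theorem two_mul_Dq_E6 : 2 * Dq E6 = E2 * E6 - E4 ^ 2 := by
  rw [E6_eq, Dq_sub, Dq_one, Dq_mul, Dq_ofNat, E2_eq, E4_eq]
  linear_combination (-24) * sigmaSeries_one_mul_sigmaSeries_five
    + 480 * sigmaSeries_three_mul_sigmaSeries_three

theorem Dq_Delta : Dq Δ' = E2 * Δ' := by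
  rw [Δ', Dq_C_mul, Dq_sub, Dq_pow, Dq_pow]
  linear_combination C (1 / 1728 : ℚ) * (E4 ^ 2 * three_mul_Dq_E4 - E6 * two_mul_Dq_E6)

end Ramanujan

section SquareRootOfDelta

variable {S : PowerSeries ℚ}

theorem two_mul_Dq_of_X_mul_sq_eq_Delta (hS1 : constantCoeff S = 1) (hS2 : X * S ^ 2 = Δ') :
    2 * Dq S = (E2 - 1) * S := by
  have hXS : (X : PowerSeries ℚ) * S ≠ 0 :=
    mul_ne_zero X_ne_zero fun h => by simp [h] at hS1
  have h := congrArg Dq hS2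
  rw [Dq_mul, Dq_X, Dq_pow, Dq_Delta, ← hS2] at h
  refine mul_left_cancel₀ hXS ?_
  linear_combination h

theorem two_mul_Dq_inv_of_X_mul_sq_eq_Delta (hS1 : constantCoeff S = 1) (hS2 : X * S ^ 2 = Δ') :
    2 * Dq S⁻¹ = (1 - E2) * S⁻¹ := by
  have hinv : S * S⁻¹ = 1 := PowerSeries.mul_inv_cancel S (by simp [hS1])
  have h := congrArg Dq hinv
  rw [Dq_mul, Dq_one] at h
  refine mul_left_cancel₀ (fun h0 => by simp [h0] at hS1 : S ≠ 0) ?_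
  linear_combination 2 * h - S⁻¹ * two_mul_Dq_of_X_mul_sq_eq_Delta hS1 hS2

theorem two_mul_Dq_E6_mul_inv (hS1 : constantCoeff S = 1) (hS2 : X * S ^ 2 = Δ') :
    2 * Dq (E6 * S⁻¹) = (E6 - E4 ^ 2) * S⁻¹ := by
  rw [Dq_mul]
  linear_combination S⁻¹ * two_mul_Dq_E6 + E6 * two_mul_Dq_inv_of_X_mul_sq_eq_Delta hS1 hS2

theorem twelve_mul_Dq_Dq_E6_mul_inv (hS1 : constantCoeff S = 1) (hS2 : X * S ^ 2 = Δ') :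
    12 * Dq (Dq (E6 * S⁻¹)) = (3 * E6 - 6 * E4 ^ 2 - E2 * E4 ^ 2 + 4 * E4 * E6) * S⁻¹ := by
  have h := congrArg Dq (two_mul_Dq_E6_mul_inv hS1 hS2)
  rw [Dq_mul (2 : PowerSeries ℚ), Dq_ofNat, Dq_mul (E6 - E4 ^ 2), Dq_sub, Dq_pow] at h
  linear_combination 6 * h + 3 * S⁻¹ * two_mul_Dq_E6 - 4 * E4 * S⁻¹ * three_mul_Dq_E4
    + 3 * (E6 - E4 ^ 2) * two_mul_Dq_inv_of_X_mul_sq_eq_Delta hS1 hS2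

end SquareRootOfDelta

section Operators

variable (σ : RatFunc ℚ →ₐ[ℚ] RatFunc ℚ)

theorem ι_Dq (f : PowerSeries ℚ) : ι (Dq f) = Dq (ι f) := (Dq_map _ f).symm

theorem Ψop_C (r : RatFunc ℚ) : Ψop σ (C r) = C (σ r) := map_C _ r

theorem Ψop_ι (f : PowerSeries ℚ) : Ψop σ (ι f) = ι f := by
  ext n
  simp only [Ψop, ι, coeff_map]
  exact σ.commutes _

theorem Ψop_Dq (G : PowerSeries (RatFunc ℚ)) : Ψop σ (Dq G) = Dq (Ψop σ G) := (Dq_map _ G).symm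

def DcalAt (k : RatFunc ℚ) (G : PowerSeries (RatFunc ℚ)) : PowerSeries (RatFunc ℚ) :=
  Dq (Dq G) + C k * Dq G +
    (C (k ^ 2 / 4) * (1 - ι E4) + ι (PowerSeries.C (R := ℚ) 144 * Δ' * (E4⁻¹) ^ 2)) * G

theorem Dcal_eq_DcalAt (G : PowerSeries (RatFunc ℚ)) : Dcal G = DcalAt RatFunc.X G := rfl

theorem Ψop_DcalAt (k : RatFunc ℚ) (G : PowerSeries (RatFunc ℚ)) :
    Ψop σ (DcalAt k G) = DcalAt (σ k) (Ψop σ G) := by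
  simp only [DcalAt, map_add, map_mul, map_sub, map_one, Ψop_Dq, Ψop_C, Ψop_ι, map_div₀, map_pow,
    map_ofNat]

theorem Dcal'_add (F G : PowerSeries (RatFunc ℚ)) : Dcal' (F + G) = Dcal' F + Dcal' G := by
  simp only [Dcal', Dq_add]; ring

theorem Dcal'_sub (F G : PowerSeries (RatFunc ℚ)) : Dcal' (F - G) = Dcal' F - Dcal' G := by
  simp only [Dcal', Dq_sub]; ring

theorem Dcal'_C_mul (r : RatFunc ℚ) (G : PowerSeries (RatFunc ℚ)) :
    Dcal' (C r * G) = C r * Dcal' G := by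
  simp only [Dcal', Dq_C_mul]; ring

theorem Dcal'_sub_Dcal (G : PowerSeries (RatFunc ℚ)) :
    Dcal' G - Dcal G = -(C (RatFunc.X + 1) * ι E4 * G) := by
  have hC : C (((RatFunc.X : RatFunc ℚ) + 2) ^ 2 / 4)
      = C (RatFunc.X ^ 2 / 4) + C (RatFunc.X + 1) := by
    rw [← map_add]; congr 1; ring
  simp only [Dcal', Dcal]
  linear_combination (-(ι E4 * G)) * hC

theorem Dcal'_X_mul (H : PowerSeries (RatFunc ℚ)) :
    Dcal' (X * H) = X * DcalAt (RatFunc.X + 2) H := by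
  have hC : C (((RatFunc.X : RatFunc ℚ) + 2) ^ 2 / 4)
      = C (RatFunc.X ^ 2 / 4) + C RatFunc.X + 1 := by
    rw [← map_add, ← map_one C, ← map_add]; congr 1; ring
  have hC' : C ((RatFunc.X : RatFunc ℚ) + 2) = C RatFunc.X + 2 := by rw [map_add, map_ofNat]
  simp only [Dcal', DcalAt, Xc, Dq_mul, Dq_X, Dq_add]
  linear_combination (-(X * H)) * hC - X * Dq H * hC'

theorem Dcal'_mul_sub_mul_DcalAt (A K : PowerSeries (RatFunc ℚ)) :
    Dcal' (A * K) - A * DcalAt (RatFunc.X + 1) K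
      = (2 * Dq A - A) * Dq K + (Dq (Dq A) + C RatFunc.X * Dq A
          - (C ((2 * RatFunc.X + 1) / 4) + C ((2 * RatFunc.X + 3) / 4) * ι E4) * A) * K := by
  have h1 : C (((RatFunc.X : RatFunc ℚ) + 1) ^ 2 / 4)
      = C (RatFunc.X ^ 2 / 4) + C ((2 * RatFunc.X + 1) / 4) := by
    rw [← map_add]; congr 1; ring
  have h2 : C (((RatFunc.X : RatFunc ℚ) + 2) ^ 2 / 4)
      = C ((RatFunc.X + 1) ^ 2 / 4) + C ((2 * RatFunc.X + 3) / 4) := by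
    rw [← map_add]; congr 1; ring
  have h3 : C ((RatFunc.X : RatFunc ℚ) + 1) = C RatFunc.X + 1 := by rw [map_add, map_one]
  simp only [Dcal', DcalAt, Xc, Dq_mul, Dq_add]
  linear_combination (-(ι E4 * A * K)) * h2 - A * K * h1 - A * Dq K * h3

theorem Dcal'_E6_mul_inv_sub {S : PowerSeries ℚ} (hS1 : constantCoeff S = 1)
    (hS2 : X * S ^ 2 = Δ') (G : PowerSeries (RatFunc ℚ)) :
    Dcal' (ι E6 * ι S⁻¹ * Ψop σ G) - ι E6 * ι S⁻¹ * DcalAt (RatFunc.X + 1) (Ψop σ G)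
      = -(C (1 / 12) * ι E4 * Fcal σ S G) := by
  have hA1 : 2 * Dq (ι E6 * ι S⁻¹) = (ι E6 - ι E4 ^ 2) * ι S⁻¹ := by
    simpa only [map_mul, map_sub, map_pow, map_ofNat, ι_Dq] using
      congrArg ι (two_mul_Dq_E6_mul_inv hS1 hS2)
  have hA2 : 12 * Dq (Dq (ι E6 * ι S⁻¹))
      = (3 * ι E6 - 6 * ι E4 ^ 2 - ι E2 * ι E4 ^ 2 + 4 * ι E4 * ι E6) * ι S⁻¹ := by
    simpa only [map_mul, map_add, map_sub, map_pow, map_ofNat, ι_Dq] using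
      congrArg ι (twelve_mul_Dq_Dq_E6_mul_inv hS1 hS2)
  have hu : 12 * C ((2 * (RatFunc.X : RatFunc ℚ) + 1) / 4) = 6 * C RatFunc.X + 3 := by
    simp only [← map_ofNat C, ← map_mul, ← map_add]; congr 1; ring
  have hv : 12 * C ((2 * (RatFunc.X : RatFunc ℚ) + 3) / 4) = 6 * C RatFunc.X + 9 := by
    simp only [← map_ofNat C, ← map_mul, ← map_add]; congr 1; ring
  have hF : 12 * (C (1 / 12 : RatFunc ℚ) * ι E4 * Fcal σ S G) = ι E4 * Fcal σ S G := by
    rw [← mul_assoc, ← mul_assoc, ← map_ofNat C, ← map_mul]; norm_num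
  have h12 : (12 : PowerSeries (RatFunc ℚ)) ≠ 0 := by
    rw [← map_ofNat C, Ne, map_eq_zero_iff _ C_injective]; norm_num
  rw [Dcal'_mul_sub_mul_DcalAt]
  refine mul_left_cancel₀ h12 ?_
  rw [mul_neg, hF]
  simp only [Fcal, map_mul, map_add, map_ofNat, map_one]
  linear_combination (12 * Dq (Ψop σ G) + 6 * C RatFunc.X * Ψop σ G) * hA1 + Ψop σ G * hA2
    - ι E6 * ι S⁻¹ * Ψop σ G * hu - ι E4 * ι E6 * ι S⁻¹ * Ψop σ G * hv

end Operators

/-- `𝒟'∘Ψ_μ − Ψ_μ∘𝒟 = μ·E₄·((X+1) − ℱ/12)`. -/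
theorem commutation_rule_D_Psimu (σ : RatFunc ℚ →ₐ[ℚ] RatFunc ℚ)
    (hσ : σ RatFunc.X = RatFunc.X + 1)
    (S : PowerSeries ℚ)
    (hS1 : PowerSeries.constantCoeff (R := ℚ) S = 1)
    (hS2 : PowerSeries.X * S ^ 2 = Δ')
    (m : RatFunc ℚ) (G : PowerSeries (RatFunc ℚ)) :
    Dcal' (Psimu σ S m G) - Psimu σ S m (Dcal G)
      = PowerSeries.C (R := RatFunc ℚ) m * ι E4
          * (PowerSeries.C (R := RatFunc ℚ) (RatFunc.X + 1) * G
              - PowerSeries.C (R := RatFunc ℚ) (1/12) * Fcal σ S G) := by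
  have hΨ : Ψop σ (Dcal G) = DcalAt (RatFunc.X + 1) (Ψop σ G) := by
    rw [Dcal_eq_DcalAt, Ψop_DcalAt, hσ]
  have hΨΨ : Ψop σ (Ψop σ (Dcal G)) = DcalAt (RatFunc.X + 2) (Ψop σ (Ψop σ G)) := by
    rw [hΨ, Ψop_DcalAt, map_add, hσ, map_one, add_assoc, one_add_one_eq_two]
  simp only [Psimu, Dcal'_add, Dcal'_C_mul, Dcal'_sub, Dcal'_X_mul]
  rw [hΨΨ, hΨ]
  linear_combination C m * Dcal'_E6_mul_inv_sub σ hS1 hS2 G - C m * Dcal'_sub_Dcal G
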